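/- Let U₁ and U₂ be 2×2 unitary matrices with U₁² proportional to U₂² and U₁², U₂² not proportional to the identity. Then U₁ and U₂ commute. (Specifically, there is a common orthonormal eigenbasis {v₁,v₂} with U₁ = e^{iθ₁}(|v₁⟩⟨v₁| + e^{iθ}|v₂⟩⟨v₂|) and U₂ = e^{iθ₂}(|v₁⟩⟨v₁| − e^{iθ}|v₂⟩⟨v₂|).) -/

import Mathlib

open Matrix

/-- The rank-one operator |v⟩⟨w| on ℂ². -/
noncomputable def outer (v w : Fin 2 → ℂ) : Matrix (Fin 2) (Fin 2) ℂ :=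
  Matrix.vecMulVec v (star w)

/-!
Diagonalise `U₁` along a unit eigenvector `v`: in ℂ² the orthogonal complement of `v` is the
line of `v⊥ := perp v`, and a unitary preserves it, so `U₁ = l |v⟩⟨v| + m |v⊥⟩⟨v⊥|`.
Since `U₁²` is not scalar, `l² ≠ m²`, so the eigenspaces of `U₂² ∝ U₁²` are exactly the lines
of `v` and `v⊥`. As `U₂` commutes with `U₂²` it preserves these eigenlines, hence is diagonal
in the same orthonormal basis, and diagonal matrices commute. Factoring out the first
eigenvalue gives the phase form.
-/

section

variable {n : Type*} [Fintype n]

open ComplexOrder in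
lemma exists_star_smul_dotProduct_smul_eq_one {v : n → ℂ} (hv : v ≠ 0) :
    ∃ s : ℂ, star (s • v) ⬝ᵥ (s • v) = 1 := by
  obtain ⟨hr, him⟩ := Complex.pos_iff.mp (dotProduct_star_self_pos_iff.mpr hv)
  set r := (star v ⬝ᵥ v).re
  have hvr : (r : ℂ) = star v ⬝ᵥ v := Complex.ext rfl him
  refine ⟨((√r)⁻¹ : ℝ), ?_⟩
  rw [star_smul, smul_dotProduct, dotProduct_smul, smul_smul, smul_eq_mul, ← hvr,
    Complex.star_def, Complex.conj_ofReal, ← Complex.ofReal_mul, ← Complex.ofReal_mul,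
    Complex.ofReal_eq_one, ← sq, inv_pow, Real.sq_sqrt hr.le, inv_mul_cancel₀ hr.ne']

lemma exists_unit_eigenvector [Nonempty n] (U : Matrix n n ℂ) :
    ∃ (v : n → ℂ) (l : ℂ), star v ⬝ᵥ v = 1 ∧ U *ᵥ v = l • v := by
  obtain ⟨l, hl⟩ := Module.End.exists_eigenvalue U.mulVecLin
  obtain ⟨v, hv⟩ := hl.exists_hasEigenvector
  obtain ⟨s, hs⟩ := exists_star_smul_dotProduct_smul_eq_one hv.2
  refine ⟨s • v, l, hs, ?_⟩
  rw [mulVec_smul, ← mulVecLin_apply, hv.apply_eq_smul, smul_comm]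

variable [DecidableEq n]

lemma star_mulVec_dotProduct_mulVec {U : Matrix n n ℂ} (hU : Uᴴ * U = 1) (x y : n → ℂ) :
    star (U *ᵥ x) ⬝ᵥ (U *ᵥ y) = star x ⬝ᵥ y := by
  rw [star_mulVec, dotProduct_mulVec, vecMul_vecMul, hU, vecMul_one]

lemma star_mul_self_eq_one_of_mulVec_eq_smul {U : Matrix n n ℂ} (hU : Uᴴ * U = 1)
    {v : n → ℂ} (hv : star v ⬝ᵥ v = 1) {l : ℂ} (h : U *ᵥ v = l • v) : star l * l = 1 := by
  have := star_mulVec_dotProduct_mulVec hU v v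
  rwa [h, star_smul, smul_dotProduct, dotProduct_smul, hv, smul_smul, smul_eq_mul,
    mul_one] at this

end

lemma Complex.exists_eq_exp_of_star_mul_self_eq_one {z : ℂ} (h : star z * z = 1) :
    ∃ θ : ℝ, z = Complex.exp (Complex.I * θ) := by
  have hz : ‖z‖ = 1 := by
    rw [Complex.star_def, Complex.conj_mul'] at h
    exact_mod_cast (pow_eq_one_iff_of_nonneg (norm_nonneg z) two_ne_zero).mp (by exact_mod_cast h)
  obtain ⟨θ, hθ⟩ := (Complex.norm_eq_one_iff z).mp hz
  exact ⟨θ, by rw [← hθ, mul_comm]⟩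

namespace Qubit

variable {v x : Fin 2 → ℂ} {a b : ℂ}

lemma outer_mulVec (v w x : Fin 2 → ℂ) : outer v w *ᵥ x = (star w ⬝ᵥ x) • v := by
  rw [outer, vecMulVec_mulVec, op_smul_eq_smul]

def perp (v : Fin 2 → ℂ) : Fin 2 → ℂ := ![-star (v 1), star (v 0)]

lemma star_dotProduct_perp (v : Fin 2 → ℂ) : star v ⬝ᵥ perp v = 0 := by
  simp only [perp, dotProduct, Fin.sum_univ_two, Pi.star_apply, cons_val_zero, cons_val_one]
  ring

lemma star_perp_dotProduct (v : Fin 2 → ℂ) : star (perp v) ⬝ᵥ v = 0 := by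
  rw [star_dotProduct, star_dotProduct_perp, star_zero]

lemma star_perp_dotProduct_perp (v : Fin 2 → ℂ) : star (perp v) ⬝ᵥ perp v = star v ⬝ᵥ v := by
  simp only [perp, dotProduct, Fin.sum_univ_two, Pi.star_apply, cons_val_zero, cons_val_one,
    star_neg, star_star]
  ring

lemma outer_add_outer_perp (v : Fin 2 → ℂ) :
    outer v v + outer (perp v) (perp v) = (star v ⬝ᵥ v) • 1 := by
  ext i j
  simp only [Matrix.add_apply, Matrix.smul_apply, outer, vecMulVec_apply, perp, dotProduct,
    Fin.sum_univ_two]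
  fin_cases i <;> fin_cases j <;> simp <;> ring

lemma eq_add_perp (hv : star v ⬝ᵥ v = 1) (x : Fin 2 → ℂ) :
    x = (star v ⬝ᵥ x) • v + (star (perp v) ⬝ᵥ x) • perp v := by
  rw [← outer_mulVec, ← outer_mulVec, ← add_mulVec, outer_add_outer_perp, hv, one_smul,
    one_mulVec]

noncomputable def diagAlong (v : Fin 2 → ℂ) (a b : ℂ) : Matrix (Fin 2) (Fin 2) ℂ :=
  a • outer v v + b • outer (perp v) (perp v)

lemma diagAlong_mulVec (v : Fin 2 → ℂ) (a b : ℂ) (x : Fin 2 → ℂ) :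
    diagAlong v a b *ᵥ x = (a * (star v ⬝ᵥ x)) • v + (b * (star (perp v) ⬝ᵥ x)) • perp v := by
  rw [diagAlong, add_mulVec, smul_mulVec, smul_mulVec, outer_mulVec, outer_mulVec, smul_smul,
    smul_smul]

lemma diagAlong_mulVec_self (hv : star v ⬝ᵥ v = 1) (a b : ℂ) : diagAlong v a b *ᵥ v = a • v := by
  rw [diagAlong_mulVec, hv, star_perp_dotProduct, mul_one, mul_zero, zero_smul, add_zero]

lemma diagAlong_mulVec_perp (hv : star v ⬝ᵥ v = 1) (a b : ℂ) :
    diagAlong v a b *ᵥ perp v = b • perp v := by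
  rw [diagAlong_mulVec, star_perp_dotProduct_perp, hv, star_dotProduct_perp, mul_one, mul_zero,
    zero_smul, zero_add]

lemma eq_diagAlong (hv : star v ⬝ᵥ v = 1) {M : Matrix (Fin 2) (Fin 2) ℂ}
    (h₁ : M *ᵥ v = a • v) (h₂ : M *ᵥ perp v = b • perp v) : M = diagAlong v a b := by
  calc M = M * (outer v v + outer (perp v) (perp v)) := by
        rw [outer_add_outer_perp, hv, one_smul, mul_one]
    _ = diagAlong v a b := by
        rw [mul_add, outer, outer, mul_vecMulVec, mul_vecMulVec, h₁, h₂, smul_vecMulVec,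
          smul_vecMulVec, diagAlong, outer, outer]

lemma diagAlong_mul_diagAlong (hv : star v ⬝ᵥ v = 1) (a b c d : ℂ) :
    diagAlong v a b * diagAlong v c d = diagAlong v (a * c) (b * d) := by
  apply eq_diagAlong hv
  · rw [← mulVec_mulVec, diagAlong_mulVec_self hv, mulVec_smul, diagAlong_mulVec_self hv,
      smul_smul, mul_comm]
  · rw [← mulVec_mulVec, diagAlong_mulVec_perp hv, mulVec_smul, diagAlong_mulVec_perp hv,
      smul_smul, mul_comm]

lemma diagAlong_sq (hv : star v ⬝ᵥ v = 1) (a b : ℂ) :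
    diagAlong v a b ^ 2 = diagAlong v (a ^ 2) (b ^ 2) := by
  rw [sq, sq, sq, diagAlong_mul_diagAlong hv]

lemma commute_diagAlong (hv : star v ⬝ᵥ v = 1) (a b c d : ℂ) :
    Commute (diagAlong v a b) (diagAlong v c d) := by
  rw [Commute, SemiconjBy, diagAlong_mul_diagAlong hv, diagAlong_mul_diagAlong hv, mul_comm a,
    mul_comm b]

lemma diagAlong_self (hv : star v ⬝ᵥ v = 1) (a : ℂ) : diagAlong v a a = a • 1 := by
  rw [diagAlong, ← smul_add, outer_add_outer_perp, hv, one_smul]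

lemma smul_diagAlong (c a b : ℂ) : c • diagAlong v a b = diagAlong v (c * a) (c * b) := by
  rw [diagAlong, diagAlong, smul_add, smul_smul, smul_smul]

lemma eq_smul_self_of_diagAlong_mulVec_eq (hv : star v ⬝ᵥ v = 1) (hab : a ≠ b)
    (h : diagAlong v a b *ᵥ x = a • x) : x = (star v ⬝ᵥ x) • v := by
  have hperp : star (perp v) ⬝ᵥ x = 0 := by
    have := congrArg (star (perp v) ⬝ᵥ ·) h
    simp only [diagAlong_mulVec, dotProduct_add, dotProduct_smul, star_perp_dotProduct,
      star_perp_dotProduct_perp, hv, smul_eq_mul, mul_zero, mul_one, zero_add] at this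
    exact (mul_eq_mul_right_iff.mp this.symm).resolve_left hab
  calc x = (star v ⬝ᵥ x) • v + (star (perp v) ⬝ᵥ x) • perp v := eq_add_perp hv x
    _ = (star v ⬝ᵥ x) • v := by rw [hperp, zero_smul, add_zero]

section Unitary

variable {U : Matrix (Fin 2) (Fin 2) ℂ} {l : ℂ}

lemma exists_mulVec_perp_eq_smul (hU : Uᴴ * U = 1) (hv : star v ⬝ᵥ v = 1)
    (h : U *ᵥ v = l • v) : ∃ m : ℂ, U *ᵥ perp v = m • perp v := by
  have hl : star l ≠ 0 := by
    rintro h0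
    simpa [h0] using star_mul_self_eq_one_of_mulVec_eq_smul hU hv h
  have horth : star v ⬝ᵥ (U *ᵥ perp v) = 0 := by
    have := star_mulVec_dotProduct_mulVec hU v (perp v)
    rw [h, star_dotProduct_perp, star_smul, smul_dotProduct, smul_eq_mul] at this
    exact (mul_eq_zero.mp this).resolve_left hl
  refine ⟨star (perp v) ⬝ᵥ (U *ᵥ perp v), ?_⟩
  calc U *ᵥ perp v = (star v ⬝ᵥ (U *ᵥ perp v)) • v
        + (star (perp v) ⬝ᵥ (U *ᵥ perp v)) • perp v := eq_add_perp hv _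
    _ = _ := by rw [horth, zero_smul, zero_add]

lemma exists_eq_diagAlong (hU : Uᴴ * U = 1) (hv : star v ⬝ᵥ v = 1) (h : U *ᵥ v = l • v) :
    ∃ m : ℂ, star m * m = 1 ∧ U = diagAlong v l m := by
  obtain ⟨m, hm⟩ := exists_mulVec_perp_eq_smul hU hv h
  have hperp : star (perp v) ⬝ᵥ perp v = 1 := by rw [star_perp_dotProduct_perp, hv]
  exact ⟨m, star_mul_self_eq_one_of_mulVec_eq_smul hU hperp hm, eq_diagAlong hv h hm⟩

end Unitary

lemma exists_diagAlong_eq_exp_smul {l m : ℂ} (hl : star l * l = 1) (hm : star m * m = 1) :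
    ∃ θ₁ θ : ℝ, diagAlong v l m = Complex.exp (Complex.I * θ₁) •
      (outer v v + Complex.exp (Complex.I * θ) • outer (perp v) (perp v)) := by
  have hml : star (m / l) * (m / l) = 1 := by
    rw [star_div₀, div_mul_div_comm, hm, hl, div_one]
  obtain ⟨θ₁, rfl⟩ := Complex.exists_eq_exp_of_star_mul_self_eq_one hl
  obtain ⟨θ, hθ⟩ := Complex.exists_eq_exp_of_star_mul_self_eq_one hml
  refine ⟨θ₁, θ, ?_⟩
  rw [← hθ, smul_add, smul_smul, mul_div_cancel₀ _ (Complex.exp_ne_zero _), diagAlong]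

end Qubit

open Qubit

theorem stmt18 (U₁ U₂ : Matrix (Fin 2) (Fin 2) ℂ)
    (h₁u : U₁ᴴ * U₁ = 1)
    (h₂u : U₂ᴴ * U₂ = 1)
    (hprop : ∃ c : ℂ, c ≠ 0 ∧ U₁ ^ 2 = c • U₂ ^ 2)
    (h₁ns : ∀ c : ℂ, U₁ ^ 2 ≠ c • (1 : Matrix (Fin 2) (Fin 2) ℂ)) :
    Commute U₁ U₂ ∧
      ∃ (v₁ v₂ : Fin 2 → ℂ) (θ₁ θ θ₂ θ' : ℝ),
        dotProduct (star v₁) v₁ = 1 ∧ dotProduct (star v₂) v₂ = 1 ∧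
        dotProduct (star v₁) v₂ = 0 ∧
        U₁ = Complex.exp (Complex.I * θ₁) •
              (outer v₁ v₁ + Complex.exp (Complex.I * θ) • outer v₂ v₂) ∧
        U₂ = Complex.exp (Complex.I * θ₂) •
              (outer v₁ v₁ + Complex.exp (Complex.I * θ') • outer v₂ v₂) := by
  obtain ⟨c, hc, hsq⟩ := hprop
  obtain ⟨v, l, hv, hU₁v⟩ := exists_unit_eigenvector U₁
  have hl := star_mul_self_eq_one_of_mulVec_eq_smul h₁u hv hU₁v
  obtain ⟨m, hm, rfl⟩ := exists_eq_diagAlong h₁u hv hU₁v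
  have hU₂sq : U₂ ^ 2 = diagAlong v (c⁻¹ * l ^ 2) (c⁻¹ * m ^ 2) := by
    rw [← smul_diagAlong, ← diagAlong_sq hv, hsq, smul_smul, inv_mul_cancel₀ hc, one_smul]
  have hlm : c⁻¹ * l ^ 2 ≠ c⁻¹ * m ^ 2 := fun h ↦ h₁ns (l ^ 2) <| by
    rw [diagAlong_sq hv, mul_left_cancel₀ (inv_ne_zero hc) h, diagAlong_self hv]
  -- `U₂` commutes with `U₂ ^ 2`, whose eigenline for `c⁻¹ * l ^ 2` is spanned by `v`
  obtain ⟨α, hU₂v⟩ : ∃ α, U₂ *ᵥ v = α • v := ⟨_, eq_smul_self_of_diagAlong_mulVec_eq hv hlm <| by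
    rw [← hU₂sq, mulVec_mulVec, ← pow_succ, pow_succ', ← mulVec_mulVec, hU₂sq,
      diagAlong_mulVec_self hv, mulVec_smul]⟩
  have hα := star_mul_self_eq_one_of_mulVec_eq_smul h₂u hv hU₂v
  obtain ⟨δ, hδ, rfl⟩ := exists_eq_diagAlong h₂u hv hU₂v
  obtain ⟨θ₁, θ, hU₁⟩ := exists_diagAlong_eq_exp_smul (v := v) hl hm
  obtain ⟨θ₂, θ', hU₂⟩ := exists_diagAlong_eq_exp_smul (v := v) hα hδ
  exact ⟨commute_diagAlong hv _ _ _ _, v, perp v, θ₁, θ, θ₂, θ', hv,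
    (star_perp_dotProduct_perp v).trans hv, star_dotProduct_perp v, hU₁, hU₂⟩
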